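/- With the setting of the drift identity (W(x) = ½Σxᵢ², LW as defined there), for every x ∈ ℤ₊ⁿ: LW(x) ≤ a(1−b(x))·λ·(Σᵢ pᵢxᵢ − x_min) + (λ·x_min − μ·‖x‖₁) + ½(λ + n·μ). -/

import Mathlib

/-!
Adding a job to queue `i` raises `W = ½‖x‖²` by exactly `xᵢ + ½`, and removing one from a
nonempty queue changes it by `½ − xᵢ`, which is also an upper bound (namely `0 ≤ ½`) when the
queue is empty. With these, the arrival terms of `LW` equal the corresponding terms of the bound
exactly (the `x_min` terms cancel), and only the departure terms need the inequality.
-/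

open Finset

section HalfSqNorm

variable {ι : Type*} [Fintype ι]

noncomputable def halfSqNorm (y : ι → ℕ) : ℝ := 1 / 2 * ∑ i, (y i : ℝ) ^ 2

lemma halfSqNorm_sub_eq_single (y x : ι → ℕ) (i : ι) (h : ∀ j, j ≠ i → y j = x j) :
    halfSqNorm y - halfSqNorm x = 1 / 2 * ((y i : ℝ) ^ 2 - (x i : ℝ) ^ 2) := by
  rw [halfSqNorm, halfSqNorm, ← mul_sub, ← sum_sub_distrib,
    Fintype.sum_eq_single i fun j hj => by rw [h j hj, sub_self]]

variable [DecidableEq ι]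

lemma halfSqNorm_add_single_sub (x : ι → ℕ) (i : ι) :
    halfSqNorm (fun j => x j + if j = i then 1 else 0) - halfSqNorm x = (x i : ℝ) + 1 / 2 := by
  rw [halfSqNorm_sub_eq_single _ x i fun j hj => by simp [hj]]
  simp only [if_pos, Nat.cast_add, Nat.cast_one]
  ring

lemma halfSqNorm_sub_single_sub (x : ι → ℕ) (i : ι) (hi : 0 < x i) :
    halfSqNorm (fun j => x j - if j = i then 1 else 0) - halfSqNorm x = 1 / 2 - (x i : ℝ) := by
  rw [halfSqNorm_sub_eq_single _ x i fun j hj => by simp [hj]]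
  simp only [if_pos, Nat.cast_sub (Nat.one_le_of_lt hi), Nat.cast_one]
  ring

lemma indicator_mul_halfSqNorm_sub_single_sub_le (x : ι → ℕ) (i : ι) :
    (if 0 < x i then (1 : ℝ) else 0) *
        (halfSqNorm (fun j => x j - if j = i then 1 else 0) - halfSqNorm x)
      ≤ 1 / 2 - (x i : ℝ) := by
  rcases Nat.eq_zero_or_pos (x i) with hi | hi
  · simp [hi]
  · rw [if_pos hi, one_mul, halfSqNorm_sub_single_sub x i hi]

lemma sum_mul_halfSqNorm_add_single_sub (x : ι → ℕ) (p : ι → ℝ) (hp : ∑ i, p i = 1) :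
    ∑ i, p i * (halfSqNorm (fun j => x j + if j = i then 1 else 0) - halfSqNorm x)
      = ∑ i, p i * (x i : ℝ) + 1 / 2 := by
  simp only [halfSqNorm_add_single_sub, mul_add, sum_add_distrib, ← sum_mul, hp, one_mul]

lemma sum_indicator_mul_halfSqNorm_sub_single_sub_le (x : ι → ℕ) :
    ∑ i, (if 0 < x i then (1 : ℝ) else 0) *
        (halfSqNorm (fun j => x j - if j = i then 1 else 0) - halfSqNorm x)
      ≤ Fintype.card ι / 2 - ∑ i, (x i : ℝ) := by
  calc _ ≤ ∑ i, (1 / 2 - (x i : ℝ)) :=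
        sum_le_sum fun i _ => indicator_mul_halfSqNorm_sub_single_sub_le x i
    _ = _ := by simp [sum_sub_distrib, div_eq_mul_inv]

end HalfSqNorm

theorem stmt6_general (n : ℕ) (lam mu a : ℝ) (hmu : 0 < mu)
    (p : Fin n → ℝ) (hps : ∑ i, p i = 1)
    (b : ℝ)
    (x : Fin n → ℕ) (m : Fin n)
    (W : (Fin n → ℕ) → ℝ) (hW : ∀ y, W y = (1 / 2) * ∑ i, (y i : ℝ) ^ 2)
    (LW : ℝ)
    (hLW : LW = a * (1 - b) * lam *
        (∑ i, p i * (W (fun j => x j + if j = i then 1 else 0) - W x))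
      + (1 - a * (1 - b)) * lam * (W (fun j => x j + if j = m then 1 else 0) - W x)
      + mu * ∑ i, (if 0 < x i then (1 : ℝ) else 0) *
          (W (fun j => x j - if j = i then 1 else 0) - W x)) :
    LW ≤ a * (1 - b) * lam * ((∑ i, p i * (x i : ℝ)) - (x m : ℝ))
      + (lam * (x m : ℝ) - mu * (∑ i, (x i : ℝ)))
      + (lam + n * mu) / 2 := by
  obtain rfl : W = halfSqNorm := funext hW
  have hdep := mul_le_mul_of_nonneg_left (sum_indicator_mul_halfSqNorm_sub_single_sub_le x) hmu.le
  rw [Fintype.card_fin] at hdep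
  rw [hLW, sum_mul_halfSqNorm_add_single_sub x p hps, halfSqNorm_add_single_sub x m]
  linarith

theorem stmt6 (n : ℕ) (hn : 1 ≤ n) (lam mu a : ℝ) (hlam : 0 < lam) (hmu : 0 < mu)
    (ha0 : 0 ≤ a) (ha1 : a ≤ 1)
    (p : Fin n → ℝ) (hp : ∀ i, 0 ≤ p i) (hps : ∑ i, p i = 1)
    (b : ℝ) (hb0 : 0 ≤ b) (hb1 : b ≤ 1)
    (x : Fin n → ℕ) (m : Fin n) (hm : ∀ i, x m ≤ x i)
    (W : (Fin n → ℕ) → ℝ) (hW : ∀ y, W y = (1 / 2) * ∑ i, (y i : ℝ) ^ 2)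
    (LW : ℝ)
    (hLW : LW = a * (1 - b) * lam *
        (∑ i, p i * (W (fun j => x j + if j = i then 1 else 0) - W x))
      + (1 - a * (1 - b)) * lam * (W (fun j => x j + if j = m then 1 else 0) - W x)
      + mu * ∑ i, (if 0 < x i then (1 : ℝ) else 0) *
          (W (fun j => x j - if j = i then 1 else 0) - W x)) :
    LW ≤ a * (1 - b) * lam * ((∑ i, p i * (x i : ℝ)) - (x m : ℝ))
      + (lam * (x m : ℝ) - mu * (∑ i, (x i : ℝ)))
      + (lam + n * mu) / 2 :=
  stmt6_general n lam mu a hmu p hps b x m W hW LW hLW
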